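/- Let A be an m×n complex matrix and W an n×m complex matrix, and let k = max(ind(AW), ind(WA)). Then there exists a unique m×n matrix X satisfying X*W*(AW)^(k+1) = (AW)^k, A*W*X*W*X = X, and (W*A*W*X)^* = W*A*W*X. Moreover this unique X equals A * ((WA)^⊕)^2, where (WA)^⊕ denotes the core-EP inverse of WA. -/

import Mathlib

open Matrix

noncomputable def matIndex {n : ℕ} (M : Matrix (Fin n) (Fin n) ℂ) : ℕ :=
  sInf {j | (M ^ j).rank = (M ^ (j + 1)).rank}

def IsCoreEP {n : ℕ} (M X : Matrix (Fin n) (Fin n) ℂ) : Prop :=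
  X * M ^ (matIndex M + 1) = M ^ (matIndex M) ∧ M * X * X = X ∧ (M * X)ᴴ = M * X

def IsMP {m n : ℕ} (A : Matrix (Fin m) (Fin n) ℂ) (X : Matrix (Fin n) (Fin m) ℂ) : Prop :=
  A * X * A = A ∧ X * A * X = X ∧ (A * X)ᴴ = A * X ∧ (X * A)ᴴ = X * A

def IsDrazin {n : ℕ} (M X : Matrix (Fin n) (Fin n) ℂ) : Prop :=
  M * X = X * M ∧ X * M * X = X ∧ M ^ (matIndex M + 1) * X = M ^ (matIndex M)

/-!
Put `M = W * A`. If `X` solves the weighted system at level `k`, then `Z = W * X` solves the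
level-`(k + 1)` core-EP system `Z * M ^ (k + 2) = M ^ (k + 1)`, `M * Z * Z = Z`, `(M * Z)ᴴ = M * Z`,
and `X = A * W * X * W * X = A * Z ^ 2`. A level system has at most one solution in any monoid
with involution: for two solutions `Y`, `Z`, the self-adjoint elements `M * Y` and `M * Z` absorb
each other, hence coincide, and then `Y = Y * (M * Y) = Y * (M * Z) = Z`. A core-EP inverse of `M`
solves every level system above `ind M`, which gives the formula for `X`. For existence, the range
of `M ^ j` is constant for `j ≥ ind M`, so `M ^ k * G`, with `G` a least-squares inverse of
`M ^ (k + 1)`, solves the level-`k` system, and `A * Y ^ 2` inherits the weighted system from it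
once also `k ≥ ind (A * W)`.
-/

structure IsCoreEPAt {R : Type*} [Monoid R] [Star R] (k : ℕ) (a y : R) : Prop where
  mul_pow_succ : y * a ^ (k + 1) = a ^ k
  mul_mul_self : a * y * y = y
  isSelfAdjoint_mul : IsSelfAdjoint (a * y)

section Monoid

variable {R : Type*} [Monoid R] {a s t : R} {c k : ℕ}

theorem pow_succ_mul_eq_pow_of_le (h : a ^ (c + 1) * s = a ^ c) (hck : c ≤ k) :
    a ^ (k + 1) * s = a ^ k := by
  obtain ⟨d, rfl⟩ := Nat.exists_eq_add_of_le hck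
  rw [show c + d + 1 = d + (c + 1) by omega, pow_add, mul_assoc, h, ← pow_add, Nat.add_comm]

theorem mul_pow_succ_eq_pow_of_le (h : t * a ^ (c + 1) = a ^ c) (hck : c ≤ k) :
    t * a ^ (k + 1) = a ^ k := by
  obtain ⟨d, rfl⟩ := Nat.exists_eq_add_of_le hck
  rw [show c + d + 1 = c + 1 + d by omega, pow_add, ← mul_assoc, h, ← pow_add]

theorem eq_pow_mul_pow_succ_of_mul_mul_self {y : R} (h : a * y * y = y) (j : ℕ) :
    y = a ^ j * y ^ (j + 1) := by
  induction j with
  | zero => simp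
  | succ j ih =>
    calc y = a ^ j * (a * y * y) * y ^ j := by rw [h, mul_assoc, ← pow_succ', ← ih]
      _ = a ^ (j + 1) * y ^ (j + 1 + 1) := by
        rw [pow_succ, pow_succ' y (j + 1), pow_succ' y j]; simp only [mul_assoc]

end Monoid

namespace IsCoreEPAt

variable {R : Type*} [Monoid R] [StarMul R] {k l : ℕ} {a y z : R}

theorem mono (h : IsCoreEPAt k a y) (hkl : k ≤ l) : IsCoreEPAt l a y :=
  ⟨mul_pow_succ_eq_pow_of_le h.mul_pow_succ hkl, h.mul_mul_self, h.isSelfAdjoint_mul⟩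

theorem eq_pow_mul_pow_succ (h : IsCoreEPAt k a y) : y = a ^ k * y ^ (k + 1) :=
  eq_pow_mul_pow_succ_of_mul_mul_self h.mul_mul_self k

theorem mul_eq_pow_mul_pow (h : IsCoreEPAt k a y) : a * y = a ^ (k + 1) * y ^ (k + 1) := by
  conv_lhs => rw [h.eq_pow_mul_pow_succ]
  rw [← mul_assoc, ← pow_succ']

theorem mul_mul_pow_succ (h : IsCoreEPAt k a y) : a * y * a ^ (k + 1) = a ^ (k + 1) := by
  rw [mul_assoc, h.mul_pow_succ, ← pow_succ']

theorem mul_mul_self_mul (h : IsCoreEPAt k a y) : y * (a * y) = y := by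
  rw [h.mul_eq_pow_mul_pow, ← mul_assoc, h.mul_pow_succ, ← h.eq_pow_mul_pow_succ]

theorem mul_eq_mul (hy : IsCoreEPAt k a y) (hz : IsCoreEPAt k a z) : a * y = a * z := by
  have hzy : a * z * (a * y) = a * y := by
    rw [hy.mul_eq_pow_mul_pow, ← mul_assoc, hz.mul_mul_pow_succ]
  have hyz : a * y * (a * z) = a * z := by
    rw [hz.mul_eq_pow_mul_pow, ← mul_assoc, hy.mul_mul_pow_succ]
  calc a * y = star (a * z * (a * y)) := by rw [hzy, hy.isSelfAdjoint_mul.star_eq]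
    _ = a * y * (a * z) := by
      rw [star_mul, hy.isSelfAdjoint_mul.star_eq, hz.isSelfAdjoint_mul.star_eq]
    _ = a * z := hyz

theorem unique (hy : IsCoreEPAt k a y) (hz : IsCoreEPAt k a z) : y = z :=
  calc y = y * (a * z) := by rw [← hy.mul_eq_mul hz, hy.mul_mul_self_mul]
    _ = a ^ k * z ^ (k + 1) := by rw [hz.mul_eq_pow_mul_pow, ← mul_assoc, hy.mul_pow_succ]
    _ = z := hz.eq_pow_mul_pow_succ.symm

theorem of_factorizations {s t g : R} (ht : t * a ^ (k + 1) = a ^ k)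
    (hs : a ^ (k + 1) * s = a ^ k) (hg : a ^ (k + 1) * g * a ^ (k + 1) = a ^ (k + 1))
    (hg' : IsSelfAdjoint (a ^ (k + 1) * g)) : IsCoreEPAt k a (a ^ k * g) := by
  have ha : a * (a ^ k * g) = a ^ (k + 1) * g := by rw [← mul_assoc, ← pow_succ']
  refine ⟨?_, ?_, ha ▸ hg'⟩
  · rw [← ht, mul_assoc, mul_assoc, ← mul_assoc (a ^ (k + 1)) g, hg]
  · rw [ha, ← hs, ← mul_assoc, ← mul_assoc, hg]

end IsCoreEPAt

namespace Matrix

section CommSemiring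

variable {R : Type*} [CommSemiring R] {l m n : Type*} [Fintype m] [Fintype n]

theorem range_mulVecLin_mul_le (B : Matrix l m R) (C : Matrix m n R) :
    LinearMap.range (B * C).mulVecLin ≤ LinearMap.range B.mulVecLin := by
  rw [mulVecLin_mul]
  exact LinearMap.range_comp_le_range _ _

theorem exists_mul_eq_of_range_le {B : Matrix l n R} {C : Matrix l m R}
    (h : LinearMap.range B.mulVecLin ≤ LinearMap.range C.mulVecLin) :
    ∃ S : Matrix m n R, C * S = B := by
  classical
  have hcol (i : n) : ∃ v, C *ᵥ v = B.col i := by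
    obtain ⟨v, hv⟩ := h ⟨Pi.single i 1, rfl⟩
    exact ⟨v, by simpa [mulVec_single_one] using hv⟩
  choose v hv using hcol
  exact ⟨(of v)ᵀ, ext fun r i => congrFun (hv i) r⟩

variable [DecidableEq m] [DecidableEq n]

theorem pow_mul_mul_eq_mul_mul_pow (A : Matrix m n R) (W : Matrix n m R) (j : ℕ) :
    (A * W) ^ j * A = A * (W * A) ^ j := by
  induction j with
  | zero => simp
  | succ j ih =>
    rw [pow_succ', Matrix.mul_assoc, ih, pow_succ']
    simp only [Matrix.mul_assoc]

end CommSemiring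

section Field

variable {K : Type*} [Field K] {n : Type*} [Fintype n] [DecidableEq n] {M : Matrix n n K} {j : ℕ}

theorem exists_pow_succ_mul_eq_pow_of_rank_eq (h : (M ^ j).rank = (M ^ (j + 1)).rank) :
    ∃ S, M ^ (j + 1) * S = M ^ j := by
  have hle := range_mulVecLin_mul_le (M ^ j) M
  rw [← pow_succ] at hle
  exact exists_mul_eq_of_range_le (Submodule.eq_of_le_of_finrank_le hle h.le).ge

theorem exists_mul_pow_succ_eq_pow_of_rank_eq (h : (M ^ j).rank = (M ^ (j + 1)).rank) :
    ∃ T, T * M ^ (j + 1) = M ^ j := by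
  obtain ⟨S, hS⟩ := exists_pow_succ_mul_eq_pow_of_rank_eq (M := Mᵀ) (j := j)
    (by rw [← transpose_pow, ← transpose_pow, rank_transpose, rank_transpose, h])
  refine ⟨Sᵀ, ?_⟩
  rw [← transpose_pow, ← transpose_pow] at hS
  simpa using congrArg transpose hS

end Field

/-- A least-squares (`{1,3}`-) inverse exists because `rank (Lᴴ * L) = rank Lᴴ` turns
`range (Lᴴ * L) ≤ range Lᴴ` into an equality. -/
theorem exists_mul_mul_eq_self_and_isSelfAdjoint {K : Type*} [Field K] [PartialOrder K]
    [StarRing K] [StarOrderedRing K] {m n : Type*} [Fintype m] [Fintype n] (L : Matrix m n K) :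
    ∃ G : Matrix n m K, L * G * L = L ∧ IsSelfAdjoint (L * G) := by
  have hrank : Module.finrank K (LinearMap.range Lᴴ.mulVecLin) ≤
      Module.finrank K (LinearMap.range (Lᴴ * L).mulVecLin) :=
    (rank_conjTranspose L).trans (rank_conjTranspose_mul_self L).symm |>.le
  obtain ⟨G, hG⟩ := exists_mul_eq_of_range_le
    (Submodule.eq_of_le_of_finrank_le (range_mulVecLin_mul_le Lᴴ L) hrank).ge
  have hLG : (L * G)ᴴ = (L * G)ᴴ * (L * G) := by
    rw [conjTranspose_mul, Matrix.mul_assoc Gᴴ, ← Matrix.mul_assoc Lᴴ, hG]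
  have hH : (L * G)ᴴ = L * G := by
    conv_rhs => rw [← conjTranspose_conjTranspose (L * G), hLG, conjTranspose_mul,
      conjTranspose_conjTranspose]
    exact hLG
  refine ⟨G, conjTranspose_injective ?_, hH⟩
  rw [conjTranspose_mul, hH, ← Matrix.mul_assoc, hG]

end Matrix

section Index

variable {n : ℕ} (M : Matrix (Fin n) (Fin n) ℂ) {k : ℕ}

theorem rank_pow_matIndex_eq_rank_pow_succ :
    (M ^ matIndex M).rank = (M ^ (matIndex M + 1)).rank := by
  obtain ⟨j, hj⟩ := WellFounded.not_rel_apply_succ (r := (· < ·)) fun j => (M ^ j).rank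
  have hj' : (M ^ j).rank = (M ^ (j + 1)).rank :=
    le_antisymm (not_lt.mp hj) (by rw [pow_succ]; exact rank_mul_le_left _ _)
  exact Nat.sInf_mem (s := {j | (M ^ j).rank = (M ^ (j + 1)).rank}) ⟨j, hj'⟩

theorem exists_pow_succ_mul_eq_pow_of_matIndex_le (hk : matIndex M ≤ k) :
    ∃ S, M ^ (k + 1) * S = M ^ k := by
  obtain ⟨S, hS⟩ := exists_pow_succ_mul_eq_pow_of_rank_eq (rank_pow_matIndex_eq_rank_pow_succ M)
  exact ⟨S, pow_succ_mul_eq_pow_of_le hS hk⟩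

theorem exists_mul_pow_succ_eq_pow_of_matIndex_le (hk : matIndex M ≤ k) :
    ∃ T, T * M ^ (k + 1) = M ^ k := by
  obtain ⟨T, hT⟩ := exists_mul_pow_succ_eq_pow_of_rank_eq (rank_pow_matIndex_eq_rank_pow_succ M)
  exact ⟨T, mul_pow_succ_eq_pow_of_le hT hk⟩

open scoped ComplexOrder in
theorem exists_isCoreEPAt_of_matIndex_le (hk : matIndex M ≤ k) : ∃ Y, IsCoreEPAt k M Y := by
  obtain ⟨S, hS⟩ := exists_pow_succ_mul_eq_pow_of_matIndex_le M hk
  obtain ⟨T, hT⟩ := exists_mul_pow_succ_eq_pow_of_matIndex_le M hk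
  obtain ⟨G, hG, hG'⟩ := exists_mul_mul_eq_self_and_isSelfAdjoint (M ^ (k + 1))
  exact ⟨_, IsCoreEPAt.of_factorizations hT hS hG hG'⟩

theorem IsCoreEP.isCoreEPAt {Y : Matrix (Fin n) (Fin n) ℂ} (h : IsCoreEP M Y) :
    IsCoreEPAt (matIndex M) M Y :=
  ⟨h.1, h.2.1, h.2.2⟩

end Index

section Weighted

variable {R : Type*} [CommSemiring R] [StarRing R] {m n : Type*} [Fintype m] [Fintype n]
  [DecidableEq m] {k : ℕ}

def IsWeightedCoreEPAt (k : ℕ) (A : Matrix m n R) (W : Matrix n m R) (X : Matrix m n R) : Prop :=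
  X * W * (A * W) ^ (k + 1) = (A * W) ^ k ∧ A * W * X * W * X = X ∧
    IsSelfAdjoint (W * A * W * X)

variable {A X : Matrix m n R} {W : Matrix n m R}

theorem IsWeightedCoreEPAt.eq_mul_mul (hX : IsWeightedCoreEPAt k A W X) :
    X = A * (W * X * (W * X)) := by
  conv_lhs => rw [← hX.2.1]
  simp only [Matrix.mul_assoc]

variable [DecidableEq n]

theorem IsWeightedCoreEPAt.isCoreEPAt_mul (hX : IsWeightedCoreEPAt k A W X) :
    IsCoreEPAt (k + 1) (W * A) (W * X) := by
  obtain ⟨h1, h2, h3⟩ := hX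
  refine ⟨?_, ?_, by simpa only [Matrix.mul_assoc] using h3⟩
  · calc W * X * (W * A) ^ (k + 1 + 1) = W * X * ((W * A) ^ (k + 1) * W) * A := by
          rw [pow_succ]; simp only [Matrix.mul_assoc]
      _ = W * (X * W * (A * W) ^ (k + 1)) * A := by
          rw [pow_mul_mul_eq_mul_mul_pow W A]; simp only [Matrix.mul_assoc]
      _ = (W * A) ^ (k + 1) := by
          rw [h1, ← pow_mul_mul_eq_mul_mul_pow W A, pow_succ, Matrix.mul_assoc]
  · conv_rhs => rw [← h2]
    simp only [Matrix.mul_assoc]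

theorem IsWeightedCoreEPAt.eq_of_isCoreEPAt {Y : Matrix n n R} (hX : IsWeightedCoreEPAt k A W X)
    (hY : IsCoreEPAt (k + 1) (W * A) Y) : X = A * (Y * Y) := by
  rw [hX.eq_mul_mul, hX.isCoreEPAt_mul.unique hY]

theorem IsWeightedCoreEPAt.unique {X' : Matrix m n R} (hX : IsWeightedCoreEPAt k A W X)
    (hX' : IsWeightedCoreEPAt k A W X') : X = X' :=
  (hX.eq_of_isCoreEPAt hX'.isCoreEPAt_mul).trans hX'.eq_mul_mul.symm

theorem IsCoreEPAt.isWeightedCoreEPAt {Y : Matrix n n R} {S : Matrix m m R}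
    (hY : IsCoreEPAt k (W * A) Y) (hS : (A * W) ^ (k + 1) * S = (A * W) ^ k) :
    IsWeightedCoreEPAt k A W (A * (Y * Y)) := by
  obtain ⟨h1, h2, h3⟩ := hY
  have hA : A * Y * (W * A) ^ (k + 1) = (A * W) ^ k * A := by
    rw [Matrix.mul_assoc, h1, pow_mul_mul_eq_mul_mul_pow]
  have hW : (W * A) ^ k * W = (W * A) ^ (k + 1) * W * S := by
    rw [pow_mul_mul_eq_mul_mul_pow W A, pow_mul_mul_eq_mul_mul_pow W A, Matrix.mul_assoc, hS]
  have hAY : A * Y * ((W * A) ^ k * W) = (A * W) ^ k := by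
    rw [hW, ← Matrix.mul_assoc, ← Matrix.mul_assoc, hA, Matrix.mul_assoc _ A W, ← pow_succ, hS]
  refine ⟨?_, ?_, ?_⟩
  · calc A * (Y * Y) * W * (A * W) ^ (k + 1) = A * Y * ((Y * (W * A) ^ (k + 1)) * W) := by
          rw [Matrix.mul_assoc _ W, ← pow_mul_mul_eq_mul_mul_pow W A]
          simp only [Matrix.mul_assoc]
      _ = (A * W) ^ k := by rw [h1, hAY]
  · calc A * W * (A * (Y * Y)) * W * (A * (Y * Y)) = A * (W * A * Y * Y * (W * A * Y * Y)) := by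
          simp only [Matrix.mul_assoc]
      _ = A * (Y * Y) := by rw [h2]
  · have hWA : W * A * W * (A * (Y * Y)) = W * A * (W * A * Y * Y) := by
      simp only [Matrix.mul_assoc]
    rwa [hWA, h2]

end Weighted

theorem stmt1 {m n : ℕ} (A : Matrix (Fin m) (Fin n) ℂ) (W : Matrix (Fin n) (Fin m) ℂ)
    (k : ℕ) (hk : k = max (matIndex (A * W)) (matIndex (W * A))) :
    (∃! X : Matrix (Fin m) (Fin n) ℂ,
      X * W * (A * W) ^ (k + 1) = (A * W) ^ k ∧ A * W * X * W * X = X ∧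
        (W * A * W * X)ᴴ = W * A * W * X) ∧
    ∀ (X : Matrix (Fin m) (Fin n) ℂ) (Y : Matrix (Fin n) (Fin n) ℂ),
      (X * W * (A * W) ^ (k + 1) = (A * W) ^ k ∧ A * W * X * W * X = X ∧
        (W * A * W * X)ᴴ = W * A * W * X) → IsCoreEP (W * A) Y → X = A * (Y * Y) := by
  have hAW : matIndex (A * W) ≤ k := hk ▸ le_max_left _ _
  have hWA : matIndex (W * A) ≤ k := hk ▸ le_max_right _ _
  obtain ⟨S, hS⟩ := exists_pow_succ_mul_eq_pow_of_matIndex_le (A * W) hAW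
  obtain ⟨Y₀, hY₀⟩ := exists_isCoreEPAt_of_matIndex_le (W * A) hWA
  have hX₀ : IsWeightedCoreEPAt k A W (A * (Y₀ * Y₀)) := hY₀.isWeightedCoreEPAt hS
  refine ⟨⟨A * (Y₀ * Y₀), hX₀, fun X hX => IsWeightedCoreEPAt.unique hX hX₀⟩, ?_⟩
  intro X Y hX hY
  exact IsWeightedCoreEPAt.eq_of_isCoreEPAt hX (hY.isCoreEPAt.mono (by omega))
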